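/- arXiv:2605.14798 — 2 statements merged into one kernel-verified Lean document; each statement's English description precedes it below -/
import Mathlib

section
/- Let 0 < ℓ₀ < ℓ be real numbers, let ρ₀ ≤ 0, and let R : ℝ → ℝ be integrable on [0, ℓ] with R(λ) ≥ ρ₀ for all λ ∈ [0, ℓ₀]. Let φ : ℝ → ℝ be smooth with 0 ≤ φ(λ) ≤ 1 for λ ∈ [0, ℓ₀] and φ(λ) = 1 for λ ∈ [ℓ₀, ℓ], let f : ℝ → ℝ be smooth with f(λ) = 1 for λ ∈ [0, ℓ₀], and set g = φ · f. Then ∫₀^ℓ f(λ)² R(λ) dλ ≥ ρ₀ ℓ₀ + ∫₀^ℓ g(λ)² R(λ) dλ. -/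
open MeasureTheory intervalIntegral

/-- Splitting estimate: with `0 < ℓ₀ < ℓ`, `ρ₀ ≤ 0`, `R` integrable on `[0, ℓ]` with
`R ≥ ρ₀` on `[0, ℓ₀]`, `φ` smooth with `0 ≤ φ ≤ 1` on `[0, ℓ₀]` and `φ = 1` on
`[ℓ₀, ℓ]`, and `f` smooth with `f = 1` on `[0, ℓ₀]`, the weight `g = φ·f` satisfies
`∫₀^ℓ f² R ≥ ρ₀ ℓ₀ + ∫₀^ℓ g² R`. -/
theorem stmt4 (ℓ₀ ℓ : ℝ) (hℓ₀ : 0 < ℓ₀) (hℓ : ℓ₀ < ℓ) (ρ₀ : ℝ) (hρ₀ : ρ₀ ≤ 0)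
    (R : ℝ → ℝ) (hR : IntervalIntegrable R volume 0 ℓ)
    (hRlb : ∀ x ∈ Set.Icc (0:ℝ) ℓ₀, ρ₀ ≤ R x)
    (φ : ℝ → ℝ) (hφ : ContDiff ℝ (⊤ : ℕ∞) φ)
    (hφ01 : ∀ x ∈ Set.Icc (0:ℝ) ℓ₀, 0 ≤ φ x ∧ φ x ≤ 1)
    (hφ1 : ∀ x ∈ Set.Icc ℓ₀ ℓ, φ x = 1)
    (f : ℝ → ℝ) (hf : ContDiff ℝ (⊤ : ℕ∞) f)
    (hf1 : ∀ x ∈ Set.Icc (0:ℝ) ℓ₀, f x = 1) :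
    ρ₀ * ℓ₀ + ∫ x in (0:ℝ)..ℓ, (φ x * f x) ^ 2 * R x
      ≤ ∫ x in (0:ℝ)..ℓ, (f x) ^ 2 * R x := by
  have h0ℓ₀ : (0:ℝ) ≤ ℓ₀ := hℓ₀.le
  have hsub1 : Set.uIcc (0:ℝ) ℓ₀ ⊆ Set.uIcc (0:ℝ) ℓ := by
    rw [Set.uIcc_of_le h0ℓ₀, Set.uIcc_of_le (by linarith : (0:ℝ) ≤ ℓ)]
    exact Set.Icc_subset_Icc le_rfl hℓ.le
  have hsub2 : Set.uIcc ℓ₀ ℓ ⊆ Set.uIcc (0:ℝ) ℓ := by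
    rw [Set.uIcc_of_le hℓ.le, Set.uIcc_of_le (by linarith : (0:ℝ) ≤ ℓ)]
    exact Set.Icc_subset_Icc h0ℓ₀ le_rfl
  have hR1 : IntervalIntegrable R volume 0 ℓ₀ := hR.mono_set hsub1
  have hR2 : IntervalIntegrable R volume ℓ₀ ℓ := hR.mono_set hsub2
  have hcφf : Continuous fun x => (φ x * f x) ^ 2 :=
    ((hφ.continuous.mul hf.continuous).pow 2)
  have hcf : Continuous fun x => (f x) ^ 2 := hf.continuous.pow 2
  have hig : ∀ a b : ℝ, IntervalIntegrable R volume a b →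
      IntervalIntegrable (fun x => (φ x * f x) ^ 2 * R x) volume a b := fun a b h =>
    h.continuousOn_mul hcφf.continuousOn
  have hif : ∀ a b : ℝ, IntervalIntegrable R volume a b →
      IntervalIntegrable (fun x => (f x) ^ 2 * R x) volume a b := fun a b h =>
    h.continuousOn_mul hcf.continuousOn
  have hsplitf : ∫ x in (0:ℝ)..ℓ, (f x) ^ 2 * R x
      = (∫ x in (0:ℝ)..ℓ₀, (f x) ^ 2 * R x) + ∫ x in ℓ₀..ℓ, (f x) ^ 2 * R x :=
    (integral_add_adjacent_intervals (hif _ _ hR1) (hif _ _ hR2)).symm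
  have hsplitg : ∫ x in (0:ℝ)..ℓ, (φ x * f x) ^ 2 * R x
      = (∫ x in (0:ℝ)..ℓ₀, (φ x * f x) ^ 2 * R x) + ∫ x in ℓ₀..ℓ, (φ x * f x) ^ 2 * R x :=
    (integral_add_adjacent_intervals (hig _ _ hR1) (hig _ _ hR2)).symm
  have heq2 : ∫ x in ℓ₀..ℓ, (φ x * f x) ^ 2 * R x = ∫ x in ℓ₀..ℓ, (f x) ^ 2 * R x := by
    apply integral_congr
    intro x hx
    rw [Set.uIcc_of_le hℓ.le] at hx
    simp [hφ1 x hx]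
  have heqf1 : ∫ x in (0:ℝ)..ℓ₀, (f x) ^ 2 * R x = ∫ x in (0:ℝ)..ℓ₀, R x := by
    apply integral_congr
    intro x hx
    rw [Set.uIcc_of_le h0ℓ₀] at hx
    simp [hf1 x hx]
  have heqg1 : ∫ x in (0:ℝ)..ℓ₀, (φ x * f x) ^ 2 * R x
      = ∫ x in (0:ℝ)..ℓ₀, (φ x) ^ 2 * R x := by
    apply integral_congr
    intro x hx
    rw [Set.uIcc_of_le h0ℓ₀] at hx
    simp [hf1 x hx]
  -- key pointwise estimate on [0, ℓ₀]
  have hkey : ρ₀ * ℓ₀ + ∫ x in (0:ℝ)..ℓ₀, (φ x) ^ 2 * R x ≤ ∫ x in (0:ℝ)..ℓ₀, R x := by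
    have hiφ : IntervalIntegrable (fun x => (φ x) ^ 2 * R x) volume 0 ℓ₀ :=
      hR1.continuousOn_mul ((hφ.continuous.pow 2)).continuousOn
    have hconst : (ρ₀ * ℓ₀ : ℝ) = ∫ x in (0:ℝ)..ℓ₀, ρ₀ := by
      simp [mul_comm]
    rw [hconst, ← integral_add (intervalIntegrable_const) hiφ]
    apply integral_mono_on h0ℓ₀ (intervalIntegrable_const.add hiφ) hR1
    intro x hx
    have hlb := hRlb x hx
    obtain ⟨hφ0, hφ1'⟩ := hφ01 x hx
    have hφsq : (φ x) ^ 2 ≤ 1 := by nlinarith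
    have hφsq0 : 0 ≤ (φ x) ^ 2 := sq_nonneg _
    rcases le_or_gt 0 (R x) with h | h
    · nlinarith
    · nlinarith
  rw [hsplitf, hsplitg, heq2, heqf1, heqg1]
  linarith
end

section
/- Let n ≥ 3 be a natural number, 0 < ℓ₀ < ℓ, ρ₀ ≤ 0, Q₀ ≥ 0, Q_m ≥ 0, and m a positive natural number. Let R : ℝ → ℝ be integrable on [0, ℓ] with R(λ) ≥ ρ₀ for all λ ∈ [0, ℓ₀], and suppose R satisfies the quantum-energy-inequality-type bound: for every smooth compactly supported h : ℝ → ℝ, ∫_ℝ R(λ) h(λ)² dλ ≥ −Q₀ ∫_ℝ h(λ)² dλ − Q_m ∫_ℝ (h^{(m)}(λ))² dλ. Let φ : ℝ → ℝ be smooth with 0 ≤ φ ≤ 1 on [0, ℓ₀] and φ = 1 on [ℓ₀, ℓ], let f : ℝ → ℝ be smooth with f = 1 on [0, ℓ₀] and f(ℓ) = 0, and suppose g := φ · f is smooth and compactly supported with support contained in [0, ℓ]. Then J_ℓ[f] := ∫₀^ℓ ((n−2) f'(λ)² − f(λ)² R(λ)) dλ ≤ (n−2) ∫₀^ℓ f'(λ)²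 dλ − ρ₀ ℓ₀ + Q₀ ∫_ℝ g(λ)² dλ + Q_m ∫_ℝ (g^{(m)}(λ))² dλ. -/
open MeasureTheory intervalIntegral

/-- Upper bound on the focal-point functional under a quantum-energy-inequality-type
curvature bound: if `R ≥ ρ₀` on `[0, ℓ₀]` and
`∫ R h² ≥ -Q₀ ∫ h² - Q_m ∫ (h^{(m)})²` for all smooth compactly supported `h`, then for
`g = φ·f` (with `φ`, `f` as in the splitting construction, `g` compactly supported in
`[0, ℓ]`),
`J_ℓ[f] ≤ (n-2) ∫₀^ℓ f'² - ρ₀ ℓ₀ + Q₀ ∫ g² + Q_m ∫ (g^{(m)})²`. -/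
theorem stmt5 (n : ℕ) (hn : 3 ≤ n) (ℓ₀ ℓ : ℝ) (hℓ₀ : 0 < ℓ₀) (hℓ : ℓ₀ < ℓ)
    (ρ₀ Q₀ Qm : ℝ) (hρ₀ : ρ₀ ≤ 0) (hQ₀ : 0 ≤ Q₀) (hQm : 0 ≤ Qm)
    (m : ℕ) (hm : 0 < m)
    (R : ℝ → ℝ) (hR : IntervalIntegrable R volume 0 ℓ)
    (hRlb : ∀ x ∈ Set.Icc (0:ℝ) ℓ₀, ρ₀ ≤ R x)
    (hQEI : ∀ h : ℝ → ℝ, ContDiff ℝ (⊤ : ℕ∞) h → HasCompactSupport h →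
      -Q₀ * (∫ x : ℝ, (h x) ^ 2) - Qm * (∫ x : ℝ, (iteratedDeriv m h x) ^ 2)
        ≤ ∫ x : ℝ, R x * (h x) ^ 2)
    (φ : ℝ → ℝ) (hφ : ContDiff ℝ (⊤ : ℕ∞) φ)
    (hφ01 : ∀ x ∈ Set.Icc (0:ℝ) ℓ₀, 0 ≤ φ x ∧ φ x ≤ 1)
    (hφ1 : ∀ x ∈ Set.Icc ℓ₀ ℓ, φ x = 1)
    (f : ℝ → ℝ) (hf : ContDiff ℝ (⊤ : ℕ∞) f)
    (hf1 : ∀ x ∈ Set.Icc (0:ℝ) ℓ₀, f x = 1) (hfℓ : f ℓ = 0)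
    (hg : HasCompactSupport (fun x => φ x * f x))
    (hgsupp : Function.support (fun x => φ x * f x) ⊆ Set.Icc (0:ℝ) ℓ) :
    (∫ x in (0:ℝ)..ℓ, ((n - 2 : ℝ) * (deriv f x) ^ 2 - (f x) ^ 2 * R x))
      ≤ (n - 2 : ℝ) * (∫ x in (0:ℝ)..ℓ, (deriv f x) ^ 2) - ρ₀ * ℓ₀
        + Q₀ * (∫ x : ℝ, (φ x * f x) ^ 2)
        + Qm * (∫ x : ℝ, (iteratedDeriv m (fun x => φ x * f x) x) ^ 2) := by
  have hfc : Continuous f := hf.continuous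
  have hgc : ContDiff ℝ (⊤ : ℕ∞) (fun x => φ x * f x) := hφ.mul hf
  have hgcont : Continuous (fun x : ℝ => φ x * f x) := hgc.continuous
  have key := hQEI _ hgc hg
  have h0ℓ : (0:ℝ) ≤ ℓ := le_trans hℓ₀.le hℓ.le
  have hmem : ℓ₀ ∈ Set.uIcc (0:ℝ) ℓ := by
    rw [Set.uIcc_of_le h0ℓ]; exact ⟨hℓ₀.le, hℓ.le⟩
  have hR1 : IntervalIntegrable R volume 0 ℓ₀ :=
    hR.mono_set (Set.uIcc_subset_uIcc Set.left_mem_uIcc hmem)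
  have hR2 : IntervalIntegrable R volume ℓ₀ ℓ :=
    hR.mono_set (Set.uIcc_subset_uIcc hmem Set.right_mem_uIcc)
  have intf2R : ∀ a b : ℝ, IntervalIntegrable R volume a b →
      IntervalIntegrable (fun x => f x ^ 2 * R x) volume a b := fun a b h =>
    h.continuousOn_mul ((hfc.pow 2).continuousOn)
  have intg2R : ∀ a b : ℝ, IntervalIntegrable R volume a b →
      IntervalIntegrable (fun x => R x * (φ x * f x) ^ 2) volume a b := fun a b h =>
    h.mul_continuousOn ((hgcont.pow 2).continuousOn)
  have hsupp : ∀ x ∉ Set.Icc (0:ℝ) ℓ, R x * (φ x * f x) ^ 2 = 0 := by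
    intro x hx
    have : φ x * f x = 0 := by
      by_contra h
      exact hx (hgsupp (Function.mem_support.mpr h))
    simp [this]
  have hline : (∫ x : ℝ, R x * (φ x * f x) ^ 2)
      = ∫ x in (0:ℝ)..ℓ, R x * (φ x * f x) ^ 2 := by
    rw [intervalIntegral.integral_of_le h0ℓ, ← MeasureTheory.integral_Icc_eq_integral_Ioc,
      MeasureTheory.setIntegral_eq_integral_of_forall_compl_eq_zero hsupp]
  have hsplitg : (∫ x in (0:ℝ)..ℓ, R x * (φ x * f x) ^ 2)
      = (∫ x in (0:ℝ)..ℓ₀, R x * (φ x * f x) ^ 2)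
        + ∫ x in ℓ₀..ℓ, R x * (φ x * f x) ^ 2 :=
    (intervalIntegral.integral_add_adjacent_intervals (intg2R _ _ hR1) (intg2R _ _ hR2)).symm
  have heq2 : (∫ x in ℓ₀..ℓ, R x * (φ x * f x) ^ 2) = ∫ x in ℓ₀..ℓ, f x ^ 2 * R x := by
    apply intervalIntegral.integral_congr
    intro x hx
    rw [Set.uIcc_of_le hℓ.le] at hx
    simp only [hφ1 x hx, one_mul]; ring
  have hmono : (∫ x in (0:ℝ)..ℓ₀, (R x * (φ x * f x) ^ 2 + ρ₀))
      ≤ ∫ x in (0:ℝ)..ℓ₀, f x ^ 2 * R x := by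
    apply intervalIntegral.integral_mono_on hℓ₀.le
      ((intg2R _ _ hR1).add intervalIntegrable_const) (intf2R _ _ hR1)
    intro x hx
    have hf1x := hf1 x hx
    obtain ⟨hφ0, hφ1'⟩ := hφ01 x hx
    have hRx := hRlb x hx
    rw [hf1x]
    nlinarith [mul_nonneg (sub_nonneg.2 hRx) (sub_nonneg.2 (by nlinarith : φ x ^ 2 ≤ 1))]
  have hconst : (∫ x in (0:ℝ)..ℓ₀, (R x * (φ x * f x) ^ 2 + ρ₀))
      = (∫ x in (0:ℝ)..ℓ₀, R x * (φ x * f x) ^ 2) + ρ₀ * ℓ₀ := by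
    rw [intervalIntegral.integral_add (intg2R _ _ hR1) intervalIntegrable_const,
      intervalIntegral.integral_const, smul_eq_mul]
    ring
  have hsplitf : (∫ x in (0:ℝ)..ℓ, f x ^ 2 * R x)
      = (∫ x in (0:ℝ)..ℓ₀, f x ^ 2 * R x) + ∫ x in ℓ₀..ℓ, f x ^ 2 * R x :=
    (intervalIntegral.integral_add_adjacent_intervals (intf2R _ _ hR1) (intf2R _ _ hR2)).symm
  have hdc : Continuous (deriv f) := hf.continuous_deriv (by simp)
  have intd : IntervalIntegrable (fun x => (n - 2 : ℝ) * (deriv f x) ^ 2) volume 0 ℓ :=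
    ((continuous_const.mul (hdc.pow 2)).intervalIntegrable 0 ℓ)
  have hLHS : (∫ x in (0:ℝ)..ℓ, ((n - 2 : ℝ) * (deriv f x) ^ 2 - (f x) ^ 2 * R x))
      = (n - 2 : ℝ) * (∫ x in (0:ℝ)..ℓ, (deriv f x) ^ 2)
        - ∫ x in (0:ℝ)..ℓ, f x ^ 2 * R x := by
    rw [intervalIntegral.integral_sub intd (intf2R _ _ hR),
      intervalIntegral.integral_const_mul]
  rw [hLHS]
  have : ρ₀ * ℓ₀ - Q₀ * (∫ x : ℝ, (φ x * f x) ^ 2)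
      - Qm * (∫ x : ℝ, (iteratedDeriv m (fun x => φ x * f x) x) ^ 2)
      ≤ ∫ x in (0:ℝ)..ℓ, f x ^ 2 * R x := by
    rw [hline] at key
    linarith [hmono, hconst, hsplitf, hsplitg, heq2, key]
  linarith
end
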